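/- arXiv:2406.04020 — 3 statements merged into one kernel-verified Lean document; each statement's English description precedes it below -/
import Mathlib

section
/- For every n ≥ 1, the edge open packing number of the path P_n equals (n+1)/2 if n ≡ 3 (mod 4), and ⌈(n-1)/2⌉ otherwise. -/
open SimpleGraph

/-- An edge open packing (EOP) set: a set `B` of edges of `G` such that no edge of `G`
(other than the two edges themselves) joins an endvertex of one edge of `B` to an
endvertex of another edge of `B`. -/
def IsEOPSet {V : Type*} (G : SimpleGraph V) (B : Set (Sym2 V)) : Prop :=
  B ⊆ G.edgeSet ∧ ∀ e₁ ∈ B, ∀ e₂ ∈ B, e₁ ≠ e₂ →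
    ∀ x ∈ e₁, ∀ y ∈ e₂, G.Adj x y → s(x, y) = e₁ ∨ s(x, y) = e₂

/-- An induced matching: a set `M` of edges of `G` such that no edge of `G` joins an
endvertex of one edge of `M` to an endvertex of another edge of `M` (this in particular
forces `M` to be a matching). -/
def IsInducedMatching {V : Type*} (G : SimpleGraph V) (M : Set (Sym2 V)) : Prop :=
  M ⊆ G.edgeSet ∧ ∀ e₁ ∈ M, ∀ e₂ ∈ M, e₁ ≠ e₂ →
    ∀ x ∈ e₁, ∀ y ∈ e₂, ¬ G.Adj x y

/-- The edge open packing number `ρₑᵒ(G)`. -/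
noncomputable def eopNum {V : Type*} (G : SimpleGraph V) : ℕ :=
  sSup {n | ∃ B : Finset (Sym2 V), IsEOPSet G ↑B ∧ B.card = n}

/-- The induced matching number `ν_I(G)`. -/
noncomputable def inducedMatchingNum {V : Type*} (G : SimpleGraph V) : ℕ :=
  sSup {n | ∃ M : Finset (Sym2 V), IsInducedMatching G ↑M ∧ M.card = n}

/-- The independence number `α(G)`. -/
noncomputable def indepNum {V : Type*} (G : SimpleGraph V) : ℕ :=
  sSup {n | ∃ S : Finset V, (∀ x ∈ S, ∀ y ∈ S, ¬ G.Adj x y) ∧ S.card = n}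

/-- The open packing number `ρᵒ(G)`: maximum size of a set of vertices whose open
neighborhoods are pairwise disjoint. -/
noncomputable def openPackNum {V : Type*} (G : SimpleGraph V) : ℕ :=
  sSup {n | ∃ P : Finset V,
    (∀ x ∈ P, ∀ y ∈ P, x ≠ y → ∀ z, ¬ (G.Adj x z ∧ G.Adj y z)) ∧ P.card = n}

/-- The 2-packing number `ρ₂(G)`: maximum size of a set of vertices pairwise at
distance greater than 2. -/
noncomputable def twoPackNum {V : Type*} (G : SimpleGraph V) : ℕ :=
  sSup {n | ∃ P : Finset V,
    (∀ x ∈ P, ∀ y ∈ P, x ≠ y →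
      ¬ G.Adj x y ∧ (∀ z, ¬ (G.Adj x z ∧ G.Adj z y))) ∧ P.card = n}

/-- The 3-packing number `ρ₃(G)`: maximum size of a set of vertices pairwise at
distance greater than 3. -/
noncomputable def threePackNum {V : Type*} (G : SimpleGraph V) : ℕ :=
  sSup {n | ∃ P : Finset V,
    (∀ x ∈ P, ∀ y ∈ P, x ≠ y →
      ¬ G.Adj x y ∧ (∀ z, ¬ (G.Adj x z ∧ G.Adj z y)) ∧
      (∀ z w, ¬ (G.Adj x z ∧ G.Adj z w ∧ G.Adj w y))) ∧ P.card = n}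

/-- Minimum degree of `G` (degrees measured via `Set.ncard` of neighborhoods). -/
noncomputable def minDeg {V : Type*} (G : SimpleGraph V) : ℕ :=
  sInf {d | ∃ v, d = (G.neighborSet v).ncard}

/-- The lexicographic product `G ∘ H`. -/
def lexProd {V W : Type*} (G : SimpleGraph V) (H : SimpleGraph W) :
    SimpleGraph (V × W) where
  Adj x y := G.Adj x.1 y.1 ∨ (x.1 = y.1 ∧ H.Adj x.2 y.2)
  symm := by
    constructor
    rintro ⟨g, h⟩ ⟨g', h'⟩ (hgg | ⟨rfl, hh⟩)
    · exact Or.inl hgg.symm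
    · exact Or.inr ⟨rfl, hh.symm⟩
  loopless := by
    constructor
    rintro ⟨g, h⟩ (hgg | ⟨-, hh⟩)
    · exact G.irrefl hgg
    · exact H.irrefl hh

/-- The direct (tensor) product `G × H`. -/
def tensorProd {V W : Type*} (G : SimpleGraph V) (H : SimpleGraph W) :
    SimpleGraph (V × W) where
  Adj x y := G.Adj x.1 y.1 ∧ H.Adj x.2 y.2
  symm := by constructor; rintro ⟨g, h⟩ ⟨g', h'⟩ ⟨h1, h2⟩; exact ⟨h1.symm, h2.symm⟩
  loopless := by constructor; rintro ⟨g, h⟩ ⟨h1, -⟩; exact G.irrefl h1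

/-- The strong product `G ⊠ H`. -/
def strongProd {V W : Type*} (G : SimpleGraph V) (H : SimpleGraph W) :
    SimpleGraph (V × W) where
  Adj x y := x ≠ y ∧ (x.1 = y.1 ∨ G.Adj x.1 y.1) ∧ (x.2 = y.2 ∨ H.Adj x.2 y.2)
  symm := by
    constructor
    rintro x y ⟨hne, h1, h2⟩
    exact ⟨hne.symm, h1.imp Eq.symm (fun h => h.symm), h2.imp Eq.symm (fun h => h.symm)⟩
  loopless := by constructor; rintro x ⟨hne, -, -⟩; exact hne rfl

/-- The star `K_{1,r}` with center `none` and leaves `some i`. -/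
def starGraph (r : ℕ) : SimpleGraph (Option (Fin r)) :=
  SimpleGraph.fromRel (fun x _ => x = none)

/-- The spider `S^k`: obtained from `K_{1,k}` by subdividing every edge exactly once.
The center is `none`, `some (i, false)` are the support vertices and `some (i, true)`
the leaves. -/
def spiderGraph (k : ℕ) : SimpleGraph (Option (Fin k × Bool)) :=
  SimpleGraph.fromRel (fun x y =>
    (x = none ∧ ∃ i, y = some (i, false)) ∨
    (∃ i, x = some (i, false) ∧ y = some (i, true)))

/-- The `n`-dimensional hypercube `Q_n`: vertices are `Fin n → Bool`, adjacent iff they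
differ in exactly one coordinate. -/
def hypercube (n : ℕ) : SimpleGraph (Fin n → Bool) :=
  SimpleGraph.fromRel (fun x y =>
    (Finset.univ.filter (fun i => x i ≠ y i)).card = 1)

/-- The corona product `G ⊙ H`: vertices `(v, none)` form a copy of `G`, vertices
`(v, some h)` form a copy of `H` for each `v`, and `(v, none)` is joined to every
vertex of its copy of `H`. -/
def corona {V W : Type*} (G : SimpleGraph V) (H : SimpleGraph W) :
    SimpleGraph (V × Option W) :=
  SimpleGraph.fromRel (fun x y =>
    (x.2 = none ∧ y.2 = none ∧ G.Adj x.1 y.1) ∨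
    (x.1 = y.1 ∧ ∃ h h', x.2 = some h ∧ y.2 = some h' ∧ H.Adj h h') ∨
    (x.1 = y.1 ∧ x.2 = none ∧ ∃ h, y.2 = some h))

/-- The set of endvertices of the edges of `B`. -/
def supportSet {V : Type*} (B : Set (Sym2 V)) : Set V := {v | ∃ e ∈ B, v ∈ e}

/-!
Index the edge `{i, i + 1}` of `P_n` by `i`. A set of edges is an edge open packing exactly when
no two of its indices differ by `2`: the edge joining `{i, i + 1}` and `{i + 2, i + 3}` is adjacent
to both, while any other adjacency between two edges of the path is one of the edges itself.
Among subsets of `{0, …, m - 1}` with no two elements at distance `2`, the indices `≡ 0, 1 (mod 4)`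
form a largest one, since shifting the indices `≡ 2, 3 (mod 4)` down by `2` is injective on such
a subset.
-/

open Finset

theorem card_filter_range_mod_four_lt_two (m : ℕ) :
    #{i ∈ range m | i % 4 < 2} = 2 * (m / 4) + min (m % 4) 2 := by
  induction m with
  | zero => simp
  | succ m ih =>
    rw [range_add_one, filter_insert]
    split_ifs
    · rw [card_insert_of_notMem (by simp)]
      omega
    · omega

theorem card_le_card_filter_mod_four_lt_two {S : Finset ℕ} {m : ℕ} (hS : S ⊆ range m)
    (hS₂ : ∀ i ∈ S, i + 2 ∉ S) : #S ≤ #{i ∈ range m | i % 4 < 2} := by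
  refine card_le_card_of_injOn (fun i => if i % 4 < 2 then i else i - 2) ?_ ?_
  · intro i hi
    have := mem_range.mp (hS hi)
    simp only [coe_filter, mem_range, Set.mem_ofPred_eq]
    split_ifs <;> omega
  · intro i hi j hj hij
    by_contra hne
    have : j = i + 2 ∨ i = j + 2 := by
      simp only at hij
      split_ifs at hij <;> omega
    rcases this with rfl | rfl
    · exact hS₂ i hi hj
    · exact hS₂ j hj hi

theorem sSup_card_add_two_free (m : ℕ) :
    sSup {k | ∃ S : Finset ℕ, S ⊆ range m ∧ (∀ i ∈ S, i + 2 ∉ S) ∧ #S = k} =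
      2 * (m / 4) + min (m % 4) 2 := by
  refine IsGreatest.csSup_eq ⟨⟨{i ∈ range m | i % 4 < 2}, filter_subset _ _, ?_,
    card_filter_range_mod_four_lt_two m⟩, ?_⟩
  · intro i hi
    simp only [mem_filter, not_and] at hi ⊢
    omega
  · rintro k ⟨S, hS, hS₂, rfl⟩
    exact card_filter_range_mod_four_lt_two m ▸ card_le_card_filter_mod_four_lt_two hS hS₂

namespace SimpleGraph.pathGraph

variable {n : ℕ}

def edgeIndex : Sym2 (Fin n) → ℕ :=
  Sym2.lift ⟨fun u v => min u v, fun _ _ => min_comm _ _⟩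

theorem edgeIndex_mk (u v : Fin n) : edgeIndex s(u, v) = min (u : ℕ) v := rfl

theorem exists_eq_mk_of_mem_edgeSet {e : Sym2 (Fin n)} (he : e ∈ (pathGraph n).edgeSet) :
    ∃ u v : Fin n, (u : ℕ) + 1 = v ∧ e = s(u, v) := by
  induction e using Sym2.ind with
  | _ u v =>
    rcases pathGraph_adj.mp he with h | h
    · exact ⟨u, v, h, rfl⟩
    · exact ⟨v, u, h, Sym2.eq_swap⟩

theorem edgeIndex_injOn : Set.InjOn edgeIndex (pathGraph n).edgeSet := by
  intro e₁ he₁ e₂ he₂ h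
  obtain ⟨u₁, v₁, huv₁, rfl⟩ := exists_eq_mk_of_mem_edgeSet he₁
  obtain ⟨u₂, v₂, huv₂, rfl⟩ := exists_eq_mk_of_mem_edgeSet he₂
  simp only [edgeIndex_mk] at h
  rw [Fin.ext (show (u₁ : ℕ) = u₂ by omega), Fin.ext (show (v₁ : ℕ) = v₂ by omega)]

theorem edgeIndex_lt {e : Sym2 (Fin n)} (he : e ∈ (pathGraph n).edgeSet) :
    edgeIndex e < n - 1 := by
  obtain ⟨u, v, huv, rfl⟩ := exists_eq_mk_of_mem_edgeSet he
  simp only [edgeIndex_mk]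
  omega

theorem exists_edgeIndex_eq {i : ℕ} (hi : i < n - 1) :
    ∃ e ∈ (pathGraph n).edgeSet, edgeIndex e = i :=
  ⟨s(⟨i, by omega⟩, ⟨i + 1, by omega⟩), pathGraph_adj.mpr (Or.inl rfl), by simp [edgeIndex_mk]⟩

theorem isEOPSet_iff {B : Set (Sym2 (Fin n))} :
    IsEOPSet (pathGraph n) B ↔
      B ⊆ (pathGraph n).edgeSet ∧ ∀ e₁ ∈ B, ∀ e₂ ∈ B, edgeIndex e₂ ≠ edgeIndex e₁ + 2 := by
  refine and_congr_right fun hB => ⟨fun hEOP e₁ he₁ e₂ he₂ h => ?_, fun hB₂ e₁ he₁ e₂ he₂ hne => ?_⟩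
  all_goals
    obtain ⟨u₁, v₁, huv₁, rfl⟩ := exists_eq_mk_of_mem_edgeSet (hB he₁)
    obtain ⟨u₂, v₂, huv₂, rfl⟩ := exists_eq_mk_of_mem_edgeSet (hB he₂)
  · simp only [edgeIndex_mk] at h
    have hne : s(u₁, v₁) ≠ s(u₂, v₂) := by
      simp only [ne_eq, Sym2.eq_iff, Fin.ext_iff]
      omega
    have hadj : (pathGraph n).Adj v₁ u₂ := pathGraph_adj.mpr (by omega)
    have h₁₂ := hEOP _ he₁ _ he₂ hne v₁ (Sym2.mem_mk_right _ _) u₂ (Sym2.mem_mk_left _ _) hadj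
    simp only [Sym2.eq_iff, Fin.ext_iff] at h₁₂
    omega
  · have h₁₂ := hB₂ _ he₁ _ he₂
    have h₂₁ := hB₂ _ he₂ _ he₁
    simp only [edgeIndex_mk] at h₁₂ h₂₁
    simp only [ne_eq, Sym2.eq_iff, Fin.ext_iff] at hne
    rintro x hx y hy hxy
    simp only [Sym2.mem_iff] at hx hy
    rw [pathGraph_adj] at hxy
    simp only [Sym2.eq_iff, Fin.ext_iff]
    rcases hx with rfl | rfl <;> rcases hy with rfl | rfl <;> omega

theorem setOf_card_isEOPSet :
    {k | ∃ B : Finset (Sym2 (Fin n)), IsEOPSet (pathGraph n) ↑B ∧ #B = k} =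
      {k | ∃ S : Finset ℕ, S ⊆ range (n - 1) ∧ (∀ i ∈ S, i + 2 ∉ S) ∧ #S = k} := by
  ext k
  simp only [Set.mem_ofPred_eq, isEOPSet_iff]
  constructor
  · rintro ⟨B, ⟨hB, hB₂⟩, rfl⟩
    refine ⟨B.image edgeIndex, fun i hi => ?_, fun i hi hi₂ => ?_,
      card_image_of_injOn (edgeIndex_injOn.mono hB)⟩
    · obtain ⟨e, he, rfl⟩ := mem_image.mp hi
      exact mem_range.mpr (edgeIndex_lt (hB he))
    · obtain ⟨e₁, he₁, rfl⟩ := mem_image.mp hi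
      obtain ⟨e₂, he₂, h⟩ := mem_image.mp hi₂
      exact hB₂ e₁ he₁ e₂ he₂ h
  · rintro ⟨S, hS, hS₂, rfl⟩
    classical
    let B : Finset (Sym2 (Fin n)) := {e | e ∈ (pathGraph n).edgeSet ∧ edgeIndex e ∈ S}
    have hB : ↑B ⊆ (pathGraph n).edgeSet := fun e he => (mem_filter.mp he).2.1
    have hBS : B.image edgeIndex = S := by
      ext i
      refine ⟨fun hi => ?_, fun hi => ?_⟩
      · obtain ⟨e, he, rfl⟩ := mem_image.mp hi
        exact (mem_filter.mp he).2.2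
      · obtain ⟨e, he, rfl⟩ := exists_edgeIndex_eq (mem_range.mp (hS hi))
        exact mem_image_of_mem _ (mem_filter.mpr ⟨mem_univ _, he, hi⟩)
    refine ⟨B, ⟨hB, fun e₁ he₁ e₂ he₂ h => hS₂ _ (mem_filter.mp he₁).2.2 ?_⟩, ?_⟩
    · exact h ▸ (mem_filter.mp he₂).2.2
    · rw [← hBS, card_image_of_injOn (edgeIndex_injOn.mono hB)]

end SimpleGraph.pathGraph

theorem stmt_1_general (n : ℕ) :
    eopNum (SimpleGraph.pathGraph n) =
      if n % 4 = 3 then (n + 1) / 2 else (n - 1 + 1) / 2 := by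
  rw [eopNum, pathGraph.setOf_card_isEOPSet, sSup_card_add_two_free]
  split_ifs <;> omega

/-- For every `n ≥ 1`, `ρₑᵒ(P_n) = (n+1)/2` if `n ≡ 3 (mod 4)` and `⌈(n-1)/2⌉` otherwise. -/
theorem stmt_1 (n : ℕ) (hn : 1 ≤ n) :
    eopNum (SimpleGraph.pathGraph n) =
      if n % 4 = 3 then (n + 1) / 2 else (n - 1 + 1) / 2 :=
  stmt_1_general n
end

section
/- For arbitrary graphs G and H, the direct product satisfies ν_I(G × H) ≥ 2·ν_I(G)·ν_I(H). -/
open SimpleGraph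

/-
Take maximum induced matchings `M` of `G` and `N` of `H`. Every pair of edges `ab ∈ M`,
`cd ∈ N` lifts to the two distinct edges `(a,c)(b,d)` and `(a,d)(b,c)` of `G × H`, which gives
`2 |M| |N|` edges lying over `M × N`. They form an induced matching: an edge of `G × H` joining
two of them projects to edges of `G` and `H` joining their projections, so both lie over the same
pair `ab, cd`, and there the two lifts are not joined by any edge.
-/

open Finset

section InducedMatchingNum

variable {V : Type*} [Finite V] (G : SimpleGraph V)

lemma bddAbove_inducedMatching_cards :
    BddAbove {n | ∃ M : Finset (Sym2 V), IsInducedMatching G ↑M ∧ M.card = n} := by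
  refine ⟨Nat.card (Sym2 V), ?_⟩
  rintro _ ⟨M, -, rfl⟩
  rw [← Set.ncard_coe_finset]
  exact Set.ncard_le_card _

lemma exists_isInducedMatching_card_eq_inducedMatchingNum :
    ∃ M : Finset (Sym2 V), IsInducedMatching G ↑M ∧ M.card = inducedMatchingNum G :=
  Nat.sSup_mem (s := {n | ∃ M : Finset (Sym2 V), IsInducedMatching G ↑M ∧ M.card = n})
    ⟨0, ∅, by simp [IsInducedMatching]⟩ (bddAbove_inducedMatching_cards G)

variable {G} in
lemma IsInducedMatching.ncard_le_inducedMatchingNum {M : Set (Sym2 V)}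
    (hM : IsInducedMatching G M) : M.ncard ≤ inducedMatchingNum G := by
  rw [Set.ncard_eq_toFinset_card M]
  apply le_csSup (bddAbove_inducedMatching_cards G)
  exact ⟨M.toFinite.toFinset, by rwa [Set.Finite.coe_toFinset], rfl⟩

end InducedMatchingNum

section TensorProd

variable {V W : Type*} {G : SimpleGraph V} {H : SimpleGraph W}

variable (G H) in
def tensorEdgesOver (M : Set (Sym2 V)) (N : Set (Sym2 W)) : Set (Sym2 (V × W)) :=
  {p ∈ (tensorProd G H).edgeSet | p.map Prod.fst ∈ M ∧ p.map Prod.snd ∈ N}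

/- Over a fixed pair of edges `s(a, b)`, `s(c, d)`, the endpoints of an edge of `G × H` differ in
both coordinates, so each endpoint determines the edge; adjacent `x`, `y` are such a pair of
opposite endpoints, hence `p = s(x, y) = q`. -/
lemma tensorProd_edge_eq_of_adj {p q : Sym2 (V × W)} {x y : V × W}
    (hp : p ∈ (tensorProd G H).edgeSet) (hq : q ∈ (tensorProd G H).edgeSet)
    (hx : x ∈ p) (hy : y ∈ q) (hxy : (tensorProd G H).Adj x y)
    (h₁ : p.map Prod.fst = q.map Prod.fst) (h₂ : p.map Prod.snd = q.map Prod.snd) :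
    p = q := by
  obtain ⟨x', rfl⟩ := Sym2.mem_iff_exists.1 hx
  obtain ⟨y', rfl⟩ := Sym2.mem_iff_exists.1 hy
  obtain ⟨hx₁, hx₂⟩ : G.Adj x.1 x'.1 ∧ H.Adj x.2 x'.2 := hp
  obtain ⟨hy₁, hy₂⟩ : G.Adj y.1 y'.1 ∧ H.Adj y.2 y'.2 := hq
  obtain ⟨hxy₁, hxy₂⟩ : G.Adj x.1 y.1 ∧ H.Adj x.2 y.2 := hxy
  simp only [Sym2.map_mk, Sym2.eq_iff] at h₁ h₂
  rw [Sym2.eq_swap, Sym2.eq_iff]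
  grind [SimpleGraph.Adj.ne, Prod.ext_iff]

lemma IsInducedMatching.tensorEdgesOver {M : Set (Sym2 V)} {N : Set (Sym2 W)}
    (hM : IsInducedMatching G M) (hN : IsInducedMatching H N) :
    IsInducedMatching (tensorProd G H) (tensorEdgesOver G H M N) := by
  refine ⟨fun p hp => hp.1, ?_⟩
  rintro p ⟨hp, hpM, hpN⟩ q ⟨hq, hqM, hqN⟩ hpq x hx y hy hxy
  have h₁ : p.map Prod.fst = q.map Prod.fst := by
    by_contra h
    exact hM.2 _ hpM _ hqM h x.1 (Sym2.mem_map.2 ⟨x, hx, rfl⟩)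
      y.1 (Sym2.mem_map.2 ⟨y, hy, rfl⟩) hxy.1
  have h₂ : p.map Prod.snd = q.map Prod.snd := by
    by_contra h
    exact hN.2 _ hpN _ hqN h x.2 (Sym2.mem_map.2 ⟨x, hx, rfl⟩)
      y.2 (Sym2.mem_map.2 ⟨y, hy, rfl⟩) hxy.2
  exact hpq (tensorProd_edge_eq_of_adj hp hq hx hy hxy h₁ h₂)

lemma nontrivial_tensorProd_edges_over {e : Sym2 V} {f : Sym2 W}
    (he : e ∈ G.edgeSet) (hf : f ∈ H.edgeSet) :
    {r ∈ (tensorProd G H).edgeSet | r.map Prod.fst = e ∧ r.map Prod.snd = f}.Nontrivial := by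
  induction e using Sym2.ind with | _ a b => ?_
  induction f using Sym2.ind with | _ c d => ?_
  rw [SimpleGraph.mem_edgeSet] at he hf
  refine ⟨s((a, c), (b, d)), ?_, s((a, d), (b, c)), ?_, ?_⟩
  · simp [tensorProd, he, hf]
  · simp [tensorProd, he, hf.symm, Sym2.eq_swap]
  · simp [he.ne, hf.ne]

lemma two_mul_card_mul_card_le_ncard_tensorEdgesOver [Finite V] [Finite W]
    {M : Finset (Sym2 V)} {N : Finset (Sym2 W)}
    (hM : ↑M ⊆ G.edgeSet) (hN : ↑N ⊆ H.edgeSet) :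
    2 * #M * #N ≤ (tensorEdgesOver G H M N).ncard := by
  classical
  rw [Set.ncard_eq_toFinset_card _, mul_assoc, ← card_product]
  refine mul_card_image_le_card_of_maps_to (f := fun p => (p.map Prod.fst, p.map Prod.snd))
    (fun p hp => ?_) 2 (fun ⟨e, f⟩ hef => ?_)
  · obtain ⟨-, hpM, hpN⟩ := (Set.Finite.mem_toFinset _).1 hp
    exact mem_product.2 ⟨hpM, hpN⟩
  · obtain ⟨he, hf⟩ := mem_product.1 hef
    obtain ⟨p, ⟨hp, hp₁, hp₂⟩, q, ⟨hq, hq₁, hq₂⟩, hpq⟩ :=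
      nontrivial_tensorProd_edges_over (hM he) (hN hf)
    refine one_lt_card.2 ⟨p, ?_, q, ?_, hpq⟩
    · simp [tensorEdgesOver, hp, hp₁, hp₂, he, hf]
    · simp [tensorEdgesOver, hq, hq₁, hq₂, he, hf]

end TensorProd

/-- For arbitrary graphs `G` and `H`, `ν_I(G × H) ≥ 2·ν_I(G)·ν_I(H)`. -/
theorem stmt_9 {V W : Type*} [Fintype V] [Fintype W]
    (G : SimpleGraph V) (H : SimpleGraph W) :
    2 * inducedMatchingNum G * inducedMatchingNum H ≤
      inducedMatchingNum (tensorProd G H) := by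
  obtain ⟨M, hM, hM_card⟩ := exists_isInducedMatching_card_eq_inducedMatchingNum G
  obtain ⟨N, hN, hN_card⟩ := exists_isInducedMatching_card_eq_inducedMatchingNum H
  calc 2 * inducedMatchingNum G * inducedMatchingNum H = 2 * #M * #N := by
        rw [hM_card, hN_card]
    _ ≤ (tensorEdgesOver G H M N).ncard :=
        two_mul_card_mul_card_le_ncard_tensorEdgesOver hM.1 hN.1
    _ ≤ inducedMatchingNum (tensorProd G H) :=
        (hM.tensorEdgesOver hN).ncard_le_inducedMatchingNum
end

section
/- For any graph G, ρ_3(G □ K_2) ≤ ρ_2(G); moreover, if G is bipartite then ρ_3(G □ K_2) = ρ_2(G). -/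
open SimpleGraph

/-!
Projecting a 3-packing of `G □ K₂` to `G` is injective, since vertices with the same projection are
adjacent, and gives a 2-packing, since a path of length at most 2 in `G` between two projections
lifts to a path of length at most 3 in the prism. Conversely, if `c` is a proper 2-colouring of `G`,
lift `v` to `(v, c v)`. All lifted vertices get the same colour under the proper 2-colouring
`(v, i) ↦ c v xor i` of the prism, so they are at even distance, and distance 2 is excluded because
their projections form a 2-packing.
-/

namespace SimpleGraph

variable {V W : Type*} {G : SimpleGraph V} {K : SimpleGraph W}

def IsTwoPacking (G : SimpleGraph V) (P : Finset V) : Prop :=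
  ∀ x ∈ P, ∀ y ∈ P, x ≠ y → ¬ G.Adj x y ∧ (∀ z, ¬ (G.Adj x z ∧ G.Adj z y))

def IsThreePacking (G : SimpleGraph V) (P : Finset V) : Prop :=
  ∀ x ∈ P, ∀ y ∈ P, x ≠ y →
    ¬ G.Adj x y ∧ (∀ z, ¬ (G.Adj x z ∧ G.Adj z y)) ∧
    (∀ z w, ¬ (G.Adj x z ∧ G.Adj z w ∧ G.Adj w y))

section PackingNumbers

theorem le_twoPackNum [Fintype V] {P : Finset V} (hP : G.IsTwoPacking P) :
    P.card ≤ twoPackNum G :=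
  le_csSup ⟨Fintype.card V, by rintro _ ⟨Q, -, rfl⟩; exact Q.card_le_univ⟩ ⟨P, hP, rfl⟩

theorem le_threePackNum [Fintype V] {P : Finset V} (hP : G.IsThreePacking P) :
    P.card ≤ threePackNum G :=
  le_csSup ⟨Fintype.card V, by rintro _ ⟨Q, -, rfl⟩; exact Q.card_le_univ⟩ ⟨P, hP, rfl⟩

theorem twoPackNum_le {n : ℕ} (h : ∀ P, G.IsTwoPacking P → P.card ≤ n) : twoPackNum G ≤ n :=
  csSup_le ⟨0, ∅, by simp, rfl⟩ (by rintro _ ⟨P, hP, rfl⟩; exact h P hP)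

theorem threePackNum_le {n : ℕ} (h : ∀ P, G.IsThreePacking P → P.card ≤ n) :
    threePackNum G ≤ n :=
  csSup_le ⟨0, ∅, by simp, rfl⟩ (by rintro _ ⟨P, hP, rfl⟩; exact h P hP)

end PackingNumbers

section Projection

theorem IsThreePacking.injOn_fst {P : Finset (V × W)}
    (hP : (G □ (⊤ : SimpleGraph W)).IsThreePacking P) : Set.InjOn Prod.fst (P : Set (V × W)) := by
  intro a ha b hb hab
  by_contra hne
  refine (hP a ha b hb hne).1 (boxProd_adj.2 (Or.inr ⟨?_, hab⟩))
  exact (top_adj _ _).2 fun h => hne (Prod.ext hab h)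

theorem IsThreePacking.isTwoPacking_image_fst [DecidableEq V] {P : Finset (V × W)}
    (hP : (G □ (⊤ : SimpleGraph W)).IsThreePacking P) : G.IsTwoPacking (P.image Prod.fst) := by
  simp only [IsTwoPacking, Finset.mem_image]
  rintro _ ⟨⟨a, i⟩, ha, rfl⟩ _ ⟨⟨b, j⟩, hb, rfl⟩ hab
  obtain ⟨hadj, hpath2, hpath3⟩ := hP _ ha _ hb fun h => hab (congrArg Prod.fst h)
  have hleft {x y : V} {k : W} (h : G.Adj x y) : (G □ ⊤).Adj (x, k) (y, k) :=
    boxProd_adj_left.2 h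
  by_cases hij : i = j
  · subst hij
    exact ⟨fun h => hadj (hleft h), fun z ⟨h₁, h₂⟩ => hpath2 (z, i) ⟨hleft h₁, hleft h₂⟩⟩
  · have hright (x : V) : (G □ ⊤).Adj (x, i) (x, j) := boxProd_adj_right.2 ((top_adj _ _).2 hij)
    exact ⟨fun h => hpath2 (b, i) ⟨hleft h, hright b⟩,
      fun z ⟨h₁, h₂⟩ => hpath3 (z, i) (z, j) ⟨hleft h₁, hright z, hleft h₂⟩⟩

theorem threePackNum_boxProd_top_le [Fintype V] (G : SimpleGraph V) :
    threePackNum (G □ (⊤ : SimpleGraph W)) ≤ twoPackNum G := by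
  classical
  refine threePackNum_le fun P hP => ?_
  rw [← Finset.card_image_of_injOn hP.injOn_fst]
  exact le_twoPackNum hP.isTwoPacking_image_fst

end Projection

section Lift

def Coloring.boxProdXor (c : G.Coloring Bool) (d : K.Coloring Bool) : (G □ K).Coloring Bool :=
  Coloring.mk (fun p => xor (c p.1) (d p.2)) fun {p q} h => by
    rcases boxProd_adj.1 h with ⟨h, h₂⟩ | ⟨h, h₁⟩
    · simpa [h₂] using c.valid h
    · simpa [h₁] using d.valid h

theorem Coloring.not_adj_adj_adj_of_eq (c : G.Coloring Bool) {u z w v : V} (h : c u = c v) :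
    ¬ (G.Adj u z ∧ G.Adj z w ∧ G.Adj w v) := by
  rintro ⟨h₁, h₂, h₃⟩
  have := (c.odd_length_iff_not_congr (.cons h₁ (.cons h₂ (.cons h₃ .nil)))).1 ⟨1, rfl⟩
  simp [h] at this

theorem boxProd_not_adj_adj {a b : V} (hab : a ≠ b) (hadj : ¬ G.Adj a b)
    (hpath : ∀ z, ¬ (G.Adj a z ∧ G.Adj z b)) (i j : W) (z : V × W) :
    ¬ ((G □ K).Adj (a, i) z ∧ (G □ K).Adj z (b, j)) := by
  rintro ⟨⟨h₁, -⟩ | ⟨-, h₁⟩, ⟨h₂, -⟩ | ⟨-, h₂⟩⟩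
  · exact hpath z.1 ⟨h₁, h₂⟩
  · exact hadj (by simpa [h₂] using h₁)
  · exact hadj (by simpa [← h₁] using h₂)
  · exact hab (h₁.trans h₂)

theorem IsTwoPacking.isThreePacking_image [DecidableEq V] [DecidableEq W] {P : Finset V}
    (hP : G.IsTwoPacking P) (c : G.Coloring Bool) (d : K.Coloring Bool) {s : V → W}
    (hs : ∀ v, d (s v) = c v) : (G □ K).IsThreePacking (P.image fun v => (v, s v)) := by
  simp only [IsThreePacking, Finset.mem_image]
  rintro _ ⟨a, ha, rfl⟩ _ ⟨b, hb, rfl⟩ hne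
  have hab : a ≠ b := fun h => hne (h ▸ rfl)
  obtain ⟨hadj, hpath⟩ := hP a ha b hb hab
  have hcolor : c.boxProdXor d (a, s a) = c.boxProdXor d (b, s b) := by
    show xor (c a) (d (s a)) = xor (c b) (d (s b))
    simp [hs]
  exact ⟨fun h => (c.boxProdXor d).valid h hcolor, boxProd_not_adj_adj hab hadj hpath _ _,
    fun _ _ => (c.boxProdXor d).not_adj_adj_adj_of_eq hcolor⟩

theorem twoPackNum_le_threePackNum_boxProd [Fintype V] [Fintype W] (c : G.Coloring Bool)
    (d : K.Coloring Bool) {s : V → W} (hs : ∀ v, d (s v) = c v) :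
    twoPackNum G ≤ threePackNum (G □ K) := by
  classical
  refine twoPackNum_le fun P hP => ?_
  have hinj : Function.Injective fun v => (v, s v) := fun _ _ h => congrArg Prod.fst h
  rw [← Finset.card_image_of_injective P hinj]
  exact le_threePackNum (hP.isThreePacking_image c d hs)

end Lift

end SimpleGraph

/-- For any graph `G`, `ρ₃(G □ K₂) ≤ ρ₂(G)`; if moreover `G` is bipartite, then
`ρ₃(G □ K₂) = ρ₂(G)`. -/
theorem stmt_17 {V : Type*} [Fintype V] (G : SimpleGraph V) :
    threePackNum (G.boxProd (⊤ : SimpleGraph (Fin 2))) ≤ twoPackNum G ∧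
    ((∃ c : V → Bool, ∀ x y, G.Adj x y → c x ≠ c y) →
      threePackNum (G.boxProd (⊤ : SimpleGraph (Fin 2))) = twoPackNum G) := by
  refine ⟨threePackNum_boxProd_top_le G, fun ⟨c, hc⟩ => ?_⟩
  let d : (⊤ : SimpleGraph (Fin 2)).Coloring Bool :=
    Coloring.mk finTwoEquiv fun h => finTwoEquiv.injective.ne h.ne
  refine (threePackNum_boxProd_top_le G).antisymm ?_
  exact twoPackNum_le_threePackNum_boxProd (Coloring.mk c (hc _ _)) d (s := finTwoEquiv.symm ∘ c)
    fun v => finTwoEquiv.apply_symm_apply (c v)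
end
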